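/- Soundness of RQmbC with respect to BALFI semantics: for every set of first-order formulas Γ ∪ {φ} over Ω, if Γ ⊢_RQmbC φ then Γ ⊨_RQmbC φ. -/
import Mathlib

namespace LFI

/-- The conditions making unary operations `nB` (¬) and `cB` (∘) on a Boolean algebra
into LFI operators: `a ∨ ¬a = 1` and `a ∧ ¬a ∧ ∘a = 0`.  A BALFI is a Boolean algebra
equipped with two such operations. -/
def IsBALFI {A : Type*} [BooleanAlgebra A] (nB cB : A → A) : Prop :=
  (∀ a : A, a ⊔ nB a = ⊤) ∧ (∀ a : A, a ⊓ nB a ⊓ cB a = ⊥)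

end LFI

namespace LFI

/-- First-order terms over a signature with individual constants `C` and
`n`-ary function symbols `F n`; variables are indexed by ℕ. -/
inductive FTerm (C : Type) (F : ℕ → Type) : Type
  | var : ℕ → FTerm C F
  | const : C → FTerm C F
  | func : {n : ℕ} → F n → (Fin n → FTerm C F) → FTerm C F

namespace FTerm

variable {C : Type} {F : ℕ → Type}

/-- The set of variables occurring in a term. -/
def vars : FTerm C F → Set ℕ
  | var x => {x}
  | const _ => ∅
  | func _ ts => ⋃ i, (ts i).vars

/-- Substitution of the term `t` for the variable `z` in a term. -/
def tsubst (z : ℕ) (t : FTerm C F) : FTerm C F → FTerm C F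
  | var x => if x = z then t else var x
  | const c => const c
  | func f ts => func f (fun i => tsubst z t (ts i))

end FTerm

/-- First-order formulas over the signature Ω extending Σ = {∧,∨,→,¬,∘} with
constants `C`, function symbols `F` and predicate symbols `P` (arity-indexed). -/
inductive FForm (C : Type) (F P : ℕ → Type) : Type
  | rel : {n : ℕ} → P n → (Fin n → FTerm C F) → FForm C F P
  | and : FForm C F P → FForm C F P → FForm C F P
  | or : FForm C F P → FForm C F P → FForm C F P
  | imp : FForm C F P → FForm C F P → FForm C F P
  | neg : FForm C F P → FForm C F P
  | circ : FForm C F P → FForm C F P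
  | all : ℕ → FForm C F P → FForm C F P
  | ex : ℕ → FForm C F P → FForm C F P

namespace FForm

variable {C : Type} {F P : ℕ → Type}

/-- `α ↔ β` abbreviates `(α→β) ∧ (β→α)`. -/
def iffF (a b : FForm C F P) : FForm C F P := and (imp a b) (imp b a)

/-- Conjunction of the nonempty list `γ :: l` (right-associated). -/
def conjL (γ : FForm C F P) : List (FForm C F P) → FForm C F P
  | [] => γ
  | ψ :: l => and γ (conjL ψ l)

/-- The set of free variables of a formula. -/
def fv : FForm C F P → Set ℕ
  | rel _ ts => ⋃ i, (ts i).vars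
  | and a b => fv a ∪ fv b
  | or a b => fv a ∪ fv b
  | imp a b => fv a ∪ fv b
  | neg a => fv a
  | circ a => fv a
  | all x a => fv a \ {x}
  | ex x a => fv a \ {x}

/-- `subst z t φ` is `φ[z/t]`: substitution of the term `t` for every free
occurrence of the variable `z` in `φ`. -/
def subst (z : ℕ) (t : FTerm C F) : FForm C F P → FForm C F P
  | rel p ts => rel p (fun i => FTerm.tsubst z t (ts i))
  | and a b => and (subst z t a) (subst z t b)
  | or a b => or (subst z t a) (subst z t b)
  | imp a b => imp (subst z t a) (subst z t b)
  | neg a => neg (subst z t a)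
  | circ a => circ (subst z t a)
  | all x a => if x = z then all x a else all x (subst z t a)
  | ex x a => if x = z then ex x a else ex x (subst z t a)

/-- The term `t` is free for the variable `z` in the formula: no variable of `t`
becomes bound when `t` is substituted for the free occurrences of `z`. -/
def FreeFor (t : FTerm C F) (z : ℕ) : FForm C F P → Prop
  | rel _ _ => True
  | and a b => FreeFor t z a ∧ FreeFor t z b
  | or a b => FreeFor t z a ∧ FreeFor t z b
  | imp a b => FreeFor t z a ∧ FreeFor t z b
  | neg a => FreeFor t z a
  | circ a => FreeFor t z a
  | all x a => z ∉ fv (all x a) ∨ (x ∉ t.vars ∧ FreeFor t z a)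
  | ex x a => z ∉ fv (ex x a) ∨ (x ∉ t.vars ∧ FreeFor t z a)

end FForm

open FForm

/-- Theoremhood in the Hilbert calculus RQmbC over the signature Ω: the axioms and
rules of RmbC together with (Ax∀), (Ax∃), (∀-In) and (∃-In). -/
inductive QPrf {C : Type} {F P : ℕ → Type} : FForm C F P → Prop
  | ax1 (a b : FForm C F P) : QPrf (imp a (imp b a))
  | ax2 (a b c : FForm C F P) :
      QPrf (imp (imp a (imp b c)) (imp (imp a b) (imp a c)))
  | ax3 (a b : FForm C F P) : QPrf (imp a (imp b (and a b)))
  | ax4 (a b : FForm C F P) : QPrf (imp (and a b) a)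
  | ax5 (a b : FForm C F P) : QPrf (imp (and a b) b)
  | ax6 (a b : FForm C F P) : QPrf (imp a (or a b))
  | ax7 (a b : FForm C F P) : QPrf (imp b (or a b))
  | ax8 (a b c : FForm C F P) :
      QPrf (imp (imp a c) (imp (imp b c) (imp (or a b) c)))
  | ax9 (a b : FForm C F P) : QPrf (or (imp a b) a)
  | ax10 (a : FForm C F P) : QPrf (or a (neg a))
  | bc1 (a b : FForm C F P) : QPrf (imp (circ a) (imp a (imp (neg a) b)))
  | mp {a b : FForm C F P} : QPrf (imp a b) → QPrf a → QPrf b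
  | rneg {a b : FForm C F P} : QPrf (iffF a b) → QPrf (iffF (neg a) (neg b))
  | rcirc {a b : FForm C F P} : QPrf (iffF a b) → QPrf (iffF (circ a) (circ b))
  | axAll (x : ℕ) (t : FTerm C F) (a : FForm C F P) :
      FreeFor t x a → QPrf (imp (all x a) (subst x t a))
  | axEx (x : ℕ) (t : FTerm C F) (a : FForm C F P) :
      FreeFor t x a → QPrf (imp (subst x t a) (ex x a))
  | allIn {a b : FForm C F P} (x : ℕ) :
      QPrf (imp a b) → x ∉ fv a → QPrf (imp a (all x b))
  | exIn {a b : FForm C F P} (x : ℕ) :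
      QPrf (imp a b) → x ∉ fv b → QPrf (imp (ex x a) b)

/-- Local derivation from premises in RQmbC. -/
def QDeriv {C : Type} {F P : ℕ → Type} (Γ : Set (FForm C F P)) (φ : FForm C F P) : Prop :=
  QPrf φ ∨ ∃ (γ : FForm C F P) (l : List (FForm C F P)),
    γ ∈ Γ ∧ (∀ ψ ∈ l, ψ ∈ Γ) ∧ QPrf (imp (conjL γ l) φ)

/-- Denotation of a term in a structure with domain `U`, under the assignment `μ`. -/
def tden {C : Type} {F : ℕ → Type} {U : Type} (iC : C → U)
    (iF : ∀ n, F n → (Fin n → U) → U) (μ : ℕ → U) : FTerm C F → U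
  | .var x => μ x
  | .const c => iC c
  | .func f ts => iF _ f (fun i => tden iC iF μ (ts i))

/-- Interpretation map of first-order formulas in a structure `⟨U, B, I⟩` over a
complete BALFI `B` (with LFI operators `nB`, `cB`), under an assignment:
quantifiers are interpreted as infima/suprema over all x-variants. -/
def fint {C : Type} {F P : ℕ → Type} {U A : Type} [CompleteBooleanAlgebra A]
    (nB cB : A → A) (iC : C → U) (iF : ∀ n, F n → (Fin n → U) → U)
    (iP : ∀ n, P n → (Fin n → U) → A) : FForm C F P → (ℕ → U) → A
  | .rel p ts, μ => iP _ p (fun i => tden iC iF μ (ts i))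
  | .and a b, μ => fint nB cB iC iF iP a μ ⊓ fint nB cB iC iF iP b μ
  | .or a b, μ => fint nB cB iC iF iP a μ ⊔ fint nB cB iC iF iP b μ
  | .imp a b, μ => (fint nB cB iC iF iP a μ)ᶜ ⊔ fint nB cB iC iF iP b μ
  | .neg a, μ => nB (fint nB cB iC iF iP a μ)
  | .circ a, μ => cB (fint nB cB iC iF iP a μ)
  | .all x a, μ => ⨅ u : U, fint nB cB iC iF iP a (Function.update μ x u)
  | .ex x a, μ => ⨆ u : U, fint nB cB iC iF iP a (Function.update μ x u)

/-- `φ` is valid in RQmbC: it takes value `⊤` under every assignment in every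
structure (over any nonempty domain and any complete BALFI). -/
def QValid {C : Type} {F P : ℕ → Type} (φ : FForm C F P) : Prop :=
  ∀ (U : Type), Nonempty U → ∀ (A : Type) [CompleteBooleanAlgebra A],
    ∀ nB cB : A → A, IsBALFI nB cB →
    ∀ (iC : C → U) (iF : ∀ n, F n → (Fin n → U) → U) (iP : ∀ n, P n → (Fin n → U) → A),
    ∀ μ : ℕ → U, fint nB cB iC iF iP φ μ = ⊤

/-- Local (degree-preserving) semantical consequence for RQmbC w.r.t. BALFI semantics. -/
def QConseq {C : Type} {F P : ℕ → Type} (Γ : Set (FForm C F P)) (φ : FForm C F P) : Prop :=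
  QValid φ ∨ ∃ (γ : FForm C F P) (l : List (FForm C F P)),
    γ ∈ Γ ∧ (∀ ψ ∈ l, ψ ∈ Γ) ∧ QValid (imp (conjL γ l) φ)

section Soundness

variable {C : Type} {F P : ℕ → Type} {U A : Type} [CompleteBooleanAlgebra A]
variable {nB cB : A → A} {iC : C → U} {iF : ∀ n, F n → (Fin n → U) → U}
variable {iP : ∀ n, P n → (Fin n → U) → A}

lemma compl_sup_eq_top_iff' {a b : A} : aᶜ ⊔ b = ⊤ ↔ a ≤ b := by
  rw [sup_comm, ← himp_eq, himp_eq_top_iff]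

lemma compl_sup' {a b : A} : aᶜ ⊔ b = a ⇨ b := by rw [himp_eq, sup_comm]

lemma tden_congr {μ ν : ℕ → U} (s : FTerm C F) (h : ∀ x ∈ s.vars, μ x = ν x) :
    tden iC iF μ s = tden iC iF ν s := by
  induction s with
  | var x => exact h x (by simp [FTerm.vars])
  | const c => rfl
  | func f ts ih =>
      simp only [tden]
      congr 1
      funext i
      exact ih i (fun x hx => h x (Set.mem_iUnion.mpr ⟨i, hx⟩))

lemma fint_congr {μ ν : ℕ → U} (φ : FForm C F P) (h : ∀ x ∈ FForm.fv φ, μ x = ν x) :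
    fint nB cB iC iF iP φ μ = fint nB cB iC iF iP φ ν := by
  induction φ generalizing μ ν with
  | rel p ts =>
      simp only [fint]
      congr 1
      funext i
      exact tden_congr (ts i) (fun x hx => h x (Set.mem_iUnion.mpr ⟨i, hx⟩))
  | and a b iha ihb =>
      simp only [fint]
      rw [iha (fun x hx => h x (Or.inl hx)), ihb (fun x hx => h x (Or.inr hx))]
  | or a b iha ihb =>
      simp only [fint]
      rw [iha (fun x hx => h x (Or.inl hx)), ihb (fun x hx => h x (Or.inr hx))]
  | imp a b iha ihb =>
      simp only [fint]
      rw [iha (fun x hx => h x (Or.inl hx)), ihb (fun x hx => h x (Or.inr hx))]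
  | neg a iha => simp only [fint]; rw [iha h]
  | circ a iha => simp only [fint]; rw [iha h]
  | all x a iha =>
      simp only [fint]
      refine iInf_congr (fun u => iha (fun y hy => ?_))
      by_cases hyx : y = x
      · subst hyx; simp [Function.update]
      · simp only [Function.update, dif_neg hyx]
        exact h y ⟨hy, hyx⟩
  | ex x a iha =>
      simp only [fint]
      refine iSup_congr (fun u => iha (fun y hy => ?_))
      by_cases hyx : y = x
      · subst hyx; simp [Function.update]
      · simp only [Function.update, dif_neg hyx]
        exact h y ⟨hy, hyx⟩

lemma tden_tsubst (z : ℕ) (t : FTerm C F) (μ : ℕ → U) (s : FTerm C F) :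
    tden iC iF μ (FTerm.tsubst z t s) = tden iC iF (Function.update μ z (tden iC iF μ t)) s := by
  induction s with
  | var x =>
      by_cases hx : x = z
      · subst hx; simp [FTerm.tsubst, tden]
      · simp [FTerm.tsubst, hx, tden, Function.update, hx]
  | const c => rfl
  | func f ts ih =>
      simp only [FTerm.tsubst, tden]
      congr 1
      funext i
      exact ih i

lemma tsubst_noop {z : ℕ} {t : FTerm C F} {s : FTerm C F} (h : z ∉ s.vars) :
    FTerm.tsubst z t s = s := by
  induction s with
  | var x =>
      have : x ≠ z := by
        intro hxz; subst hxz; exact h (by simp [FTerm.vars])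
      simp [FTerm.tsubst, this]
  | const c => rfl
  | func f ts ih =>
      simp only [FTerm.tsubst]
      congr 1
      funext i
      exact ih i (fun hz => h (Set.mem_iUnion.mpr ⟨i, hz⟩))

lemma subst_noop {z : ℕ} {t : FTerm C F} {φ : FForm C F P} (h : z ∉ FForm.fv φ) :
    FForm.subst z t φ = φ := by
  induction φ with
  | rel p ts =>
      simp only [FForm.subst]
      congr 1
      funext i
      exact tsubst_noop (fun hz => h (Set.mem_iUnion.mpr ⟨i, hz⟩))
  | and a b iha ihb =>
      simp only [FForm.subst]
      rw [iha (fun hz => h (Or.inl hz)), ihb (fun hz => h (Or.inr hz))]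
  | or a b iha ihb =>
      simp only [FForm.subst]
      rw [iha (fun hz => h (Or.inl hz)), ihb (fun hz => h (Or.inr hz))]
  | imp a b iha ihb =>
      simp only [FForm.subst]
      rw [iha (fun hz => h (Or.inl hz)), ihb (fun hz => h (Or.inr hz))]
  | neg a iha => simp only [FForm.subst]; rw [iha h]
  | circ a iha => simp only [FForm.subst]; rw [iha h]
  | all x a iha =>
      by_cases hxz : x = z
      · simp [FForm.subst, hxz]
      · simp only [FForm.subst, if_neg hxz]
        rw [iha (fun hz => h ⟨hz, fun hzx => hxz hzx.symm⟩)]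
  | ex x a iha =>
      by_cases hxz : x = z
      · simp [FForm.subst, hxz]
      · simp only [FForm.subst, if_neg hxz]
        rw [iha (fun hz => h ⟨hz, fun hzx => hxz hzx.symm⟩)]

lemma fint_subst (z : ℕ) (t : FTerm C F) (φ : FForm C F P)
    (hf : FForm.FreeFor t z φ) (μ : ℕ → U) :
    fint nB cB iC iF iP (FForm.subst z t φ) μ =
      fint nB cB iC iF iP φ (Function.update μ z (tden iC iF μ t)) := by
  induction φ generalizing μ with
  | rel p ts =>
      simp only [FForm.subst, fint]
      congr 1
      funext i
      exact tden_tsubst z t μ (ts i)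
  | and a b iha ihb => simp only [FForm.subst, fint, iha hf.1, ihb hf.2]
  | or a b iha ihb => simp only [FForm.subst, fint, iha hf.1, ihb hf.2]
  | imp a b iha ihb => simp only [FForm.subst, fint, iha hf.1, ihb hf.2]
  | neg a iha => simp only [FForm.subst, fint, iha hf]
  | circ a iha => simp only [FForm.subst, fint, iha hf]
  | all x a iha =>
      by_cases hxz : x = z
      · subst hxz
        simp only [FForm.subst, if_pos rfl]
        refine fint_congr _ (fun y hy => ?_)
        rcases hy with ⟨_, hyx⟩
        simp [fv] at hyx
        simp [Function.update, hyx]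
      · simp only [FForm.subst, if_neg hxz, fint]
        rcases hf with hz | ⟨hxt, hff⟩
        · have hza : z ∉ FForm.fv a := fun hz' => hz ⟨hz', fun h => hxz h.symm⟩
          rw [subst_noop hza]
          refine iInf_congr (fun u => fint_congr _ (fun y hy => ?_))
          by_cases hyx : y = x
          · subst hyx; simp [Function.update]
          · have hyz : y ≠ z := fun h => hza (h ▸ hy)
            simp [Function.update, hyx, hyz]
        · refine iInf_congr (fun u => ?_)
          rw [iha hff]
          have ht : tden iC iF (Function.update μ x u) t = tden iC iF μ t :=
            tden_congr t (fun y hy => by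
              have : y ≠ x := fun h => hxt (h ▸ hy)
              simp [Function.update, this])
          rw [ht, Function.update_comm (fun h => hxz h)]
  | ex x a iha =>
      by_cases hxz : x = z
      · subst hxz
        simp only [FForm.subst, if_pos rfl]
        refine fint_congr _ (fun y hy => ?_)
        rcases hy with ⟨_, hyx⟩
        simp [fv] at hyx
        simp [Function.update, hyx]
      · simp only [FForm.subst, if_neg hxz, fint]
        rcases hf with hz | ⟨hxt, hff⟩
        · have hza : z ∉ FForm.fv a := fun hz' => hz ⟨hz', fun h => hxz h.symm⟩
          rw [subst_noop hza]
          refine iSup_congr (fun u => fint_congr _ (fun y hy => ?_))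
          by_cases hyx : y = x
          · subst hyx; simp [Function.update]
          · have hyz : y ≠ z := fun h => hza (h ▸ hy)
            simp [Function.update, hyx, hyz]
        · refine iSup_congr (fun u => ?_)
          rw [iha hff]
          have ht : tden iC iF (Function.update μ x u) t = tden iC iF μ t :=
            tden_congr t (fun y hy => by
              have : y ≠ x := fun h => hxt (h ▸ hy)
              simp [Function.update, this])
          rw [ht, Function.update_comm (fun h => hxz h)]

end Soundness

lemma qprf_valid {C : Type} {F P : ℕ → Type} {φ : FForm C F P} (h : QPrf φ) :
    QValid φ := by
  induction h with
  | ax1 a b =>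
      intro U hU A _ nB cB hB iC iF iP μ
      simp only [fint, compl_sup_eq_top_iff']
      exact le_sup_right
  | ax2 a b c =>
      intro U hU A _ nB cB hB iC iF iP μ
      simp only [fint]
      set x := fint nB cB iC iF iP a μ
      set y := fint nB cB iC iF iP b μ
      set z := fint nB cB iC iF iP c μ
      simp only [compl_sup']
      rw [himp_eq_top_iff, le_himp_iff, le_himp_iff]
      calc (x ⇨ y ⇨ z) ⊓ (x ⇨ y) ⊓ x = ((x ⇨ y ⇨ z) ⊓ x) ⊓ ((x ⇨ y) ⊓ x) := by
            rw [inf_inf_distrib_right]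
        _ ≤ (y ⇨ z) ⊓ y := inf_le_inf himp_inf_le himp_inf_le
        _ ≤ z := himp_inf_le
  | ax3 a b =>
      intro U hU A _ nB cB hB iC iF iP μ
      simp only [fint]
      rw [compl_sup_eq_top_iff', sup_comm, ← himp_eq, le_himp_iff]
  | ax4 a b =>
      intro U hU A _ nB cB hB iC iF iP μ
      simp only [fint, compl_sup_eq_top_iff']
      exact inf_le_left
  | ax5 a b =>
      intro U hU A _ nB cB hB iC iF iP μ
      simp only [fint, compl_sup_eq_top_iff']
      exact inf_le_right
  | ax6 a b =>
      intro U hU A _ nB cB hB iC iF iP μ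
      simp only [fint, compl_sup_eq_top_iff']
      exact le_sup_left
  | ax7 a b =>
      intro U hU A _ nB cB hB iC iF iP μ
      simp only [fint, compl_sup_eq_top_iff']
      exact le_sup_right
  | ax8 a b c =>
      intro U hU A _ nB cB hB iC iF iP μ
      simp only [fint]
      set x := fint nB cB iC iF iP a μ
      set y := fint nB cB iC iF iP b μ
      set z := fint nB cB iC iF iP c μ
      simp only [compl_sup']
      rw [himp_eq_top_iff, le_himp_iff, le_himp_iff, inf_sup_left]
      refine sup_le ?_ ?_
      · calc (x ⇨ z) ⊓ (y ⇨ z) ⊓ x ≤ (x ⇨ z) ⊓ x :=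
              inf_le_inf inf_le_left le_rfl
          _ ≤ z := himp_inf_le
      · calc (x ⇨ z) ⊓ (y ⇨ z) ⊓ y ≤ (y ⇨ z) ⊓ y :=
              inf_le_inf inf_le_right le_rfl
          _ ≤ z := himp_inf_le
  | ax9 a b =>
      intro U hU A _ nB cB hB iC iF iP μ
      simp only [fint]
      rw [sup_assoc, sup_comm _ (fint nB cB iC iF iP a μ), ← sup_assoc]
      simp
  | ax10 a =>
      intro U hU A _ nB cB hB iC iF iP μ
      simp only [fint]
      exact hB.1 _
  | bc1 a b =>
      intro U hU A _ nB cB hB iC iF iP μ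
      simp only [fint]
      set x := fint nB cB iC iF iP a μ
      simp only [compl_sup']
      rw [himp_eq_top_iff, le_himp_iff, le_himp_iff]
      have : cB x ⊓ x ⊓ nB x = ⊥ := by
        rw [← hB.2 x]; ac_rfl
      rw [this]
      exact bot_le
  | mp hab ha ihab iha =>
      intro U hU A _ nB cB hB iC iF iP μ
      have h1 := ihab U hU A nB cB hB iC iF iP μ
      have h2 := iha U hU A nB cB hB iC iF iP μ
      simp only [fint, h2, compl_top, bot_sup_eq] at h1
      exact h1
  | rneg hab ih =>
      intro U hU A _ nB cB hB iC iF iP μ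
      have h1 := ih U hU A nB cB hB iC iF iP μ
      simp only [FForm.iffF, fint, inf_eq_top_iff, compl_sup_eq_top_iff'] at h1 ⊢
      have : fint nB cB iC iF iP _ μ = fint nB cB iC iF iP _ μ := le_antisymm h1.1 h1.2
      rw [this]
      exact ⟨le_rfl, le_rfl⟩
  | rcirc hab ih =>
      intro U hU A _ nB cB hB iC iF iP μ
      have h1 := ih U hU A nB cB hB iC iF iP μ
      simp only [FForm.iffF, fint, inf_eq_top_iff, compl_sup_eq_top_iff'] at h1 ⊢
      have : fint nB cB iC iF iP _ μ = fint nB cB iC iF iP _ μ := le_antisymm h1.1 h1.2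
      rw [this]
      exact ⟨le_rfl, le_rfl⟩
  | axAll x t a hfree =>
      intro U hU A _ nB cB hB iC iF iP μ
      simp only [fint, compl_sup_eq_top_iff']
      rw [fint_subst x t a hfree μ]
      exact iInf_le _ _
  | axEx x t a hfree =>
      intro U hU A _ nB cB hB iC iF iP μ
      simp only [fint, compl_sup_eq_top_iff']
      rw [fint_subst x t a hfree μ]
      exact le_iSup (fun u => fint nB cB iC iF iP a (Function.update μ x u)) _
  | @allIn a b x hab hx ih =>
      intro U hU A _ nB cB hB iC iF iP μ
      simp only [fint, compl_sup_eq_top_iff']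
      refine le_iInf (fun u => ?_)
      have h1 := ih U hU A nB cB hB iC iF iP (Function.update μ x u)
      simp only [fint, compl_sup_eq_top_iff'] at h1
      have h2 : fint nB cB iC iF iP a μ = fint nB cB iC iF iP a (Function.update μ x u) :=
        fint_congr _ (fun y hy => by
          have : y ≠ x := fun h => hx (h ▸ hy)
          simp [Function.update, this])
      exact h2.le.trans h1
  | @exIn a b x hab hx ih =>
      intro U hU A _ nB cB hB iC iF iP μ
      simp only [fint, compl_sup_eq_top_iff']
      refine iSup_le (fun u => ?_)
      have h1 := ih U hU A nB cB hB iC iF iP (Function.update μ x u)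
      simp only [fint, compl_sup_eq_top_iff'] at h1
      have h2 : fint nB cB iC iF iP b (Function.update μ x u) = fint nB cB iC iF iP b μ :=
        fint_congr _ (fun y hy => by
          have : y ≠ x := fun h => hx (h ▸ hy)
          simp [Function.update, this])
      exact h1.trans h2.le

/-- Theorem 8.9, Soundness of RQmbC w.r.t. BALFI semantics:
if `Γ ⊢_RQmbC φ` then `Γ ⊨_RQmbC φ`. -/
theorem rqmbc_soundness
    (C : Type) (F P : ℕ → Type)
    [Countable C] [∀ n, Countable (F n)] [∀ n, Countable (P n)]
    (hP : ∃ n, Nonempty (P n))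
    (Γ : Set (FForm C F P)) (φ : FForm C F P)
    (h : QDeriv Γ φ) : QConseq Γ φ := by
  rcases h with hp | ⟨γ, l, hγ, hl, hp⟩
  · exact Or.inl (qprf_valid hp)
  · exact Or.inr ⟨γ, l, hγ, hl, qprf_valid hp⟩

end LFI
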